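/- For m ≥ 5, let H = K_{m,m} \ E(C_{2m}) and W a resolving set of H. Then at most one gap of W (maximal run of consecutive non-W vertices along the cycle C_{2m}) contains four vertices. -/

import Mathlib

/-- `W` resolves `G`: every vertex is determined by its distance vector to `W`. -/
def Resolves {V : Type*} (G : SimpleGraph V) (W : Set V) : Prop :=
  ∀ u v : V, (∀ w ∈ W, G.dist u w = G.dist v w) → u = v

/-- Metric dimension: minimum cardinality of a (finite) resolving set. -/
noncomputable def metricDim {V : Type*} (G : SimpleGraph V) : ℕ :=
  sInf {k | ∃ W : Set V, W.Finite ∧ W.ncard = k ∧ Resolves G W}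
/-- `K_{m,m}` minus the Hamiltonian cycle `x₁ y₁ x₂ y₂ … x_m y_m x₁` (0-indexed:
cycle edges are `xᵢ yᵢ` and `yᵢ x_{i+1 mod m}`). -/
def cycGraph (m : ℕ) : SimpleGraph (Fin m ⊕ Fin m) where
  Adj u v := match u, v with
    | Sum.inl i, Sum.inr j => j ≠ i ∧ (i : ℕ) ≠ ((j : ℕ) + 1) % m
    | Sum.inr j, Sum.inl i => j ≠ i ∧ (i : ℕ) ≠ ((j : ℕ) + 1) % m
    | _, _ => False
  symm := ⟨by rintro (i|i) (j|j) h <;> exact h⟩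
  loopless := ⟨by rintro (i|i) h <;> exact h⟩

/-- Position `k` (taken mod `2m`) along the Hamiltonian cycle
`x₁ y₁ x₂ y₂ …`: even positions `2i ↦ xᵢ`, odd positions `2i+1 ↦ yᵢ`. -/
def cyc (m : ℕ) [NeZero m] (k : ℕ) : Fin m ⊕ Fin m :=
  if (k % (2 * m)) % 2 = 0 then
    Sum.inl ⟨k % (2 * m) / 2, by
      have hm : 0 < m := Nat.pos_of_ne_zero (NeZero.ne m)
      have h : k % (2 * m) < 2 * m := Nat.mod_lt _ (by omega)
      exact Nat.div_lt_of_lt_mul (by omega)⟩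
  else
    Sum.inr ⟨k % (2 * m) / 2, by
      have hm : 0 < m := Nat.pos_of_ne_zero (NeZero.ne m)
      have h : k % (2 * m) < 2 * m := Nat.mod_lt _ (by omega)
      exact Nat.div_lt_of_lt_mul (by omega)⟩

/-- `W` has a gap of exactly `L` vertices starting at cycle position `s`:
the positions `s` and `s+L+1` are in `W` and the `L` positions strictly between are not. -/
def IsGap (m : ℕ) [NeZero m] (W : Set (Fin m ⊕ Fin m)) (s L : ℕ) : Prop :=
  cyc m s ∈ W ∧ cyc m (s + L + 1) ∈ W ∧ ∀ t, 1 ≤ t → t ≤ L → cyc m (s + t) ∉ W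

/-!
In `K_{m,m}` minus the Hamiltonian cycle, a vertex is adjacent to every vertex of the other side
except its two cycle neighbours and, for `m ≥ 5`, at distance 2 from every other vertex of its own
side. Hence if a vertex and both its cycle neighbours lie outside `W`, its distance vector to `W`
depends only on its side, and a resolving set allows at most one such vertex per side. The two
middle vertices of a gap of four are such vertices, one on each side, so two gaps of four share
their middle vertices; as the ends of a gap lie in `W`, the gaps coincide.
-/

namespace SimpleGraph

variable {V : Type*} {G : SimpleGraph V} {u v w : V}

lemma dist_eq_two_of_adj_of_adj (huv : u ≠ v) (hn : ¬G.Adj u v) (hu : G.Adj u w)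
    (hv : G.Adj v w) : G.dist u v = 2 := by
  rw [dist, edist_eq_two_iff.mpr ⟨huv, hn, w, hu, hv⟩]
  rfl

end SimpleGraph

lemma exists_ne_of_four_lt_card {α : Type*} [Fintype α] [DecidableEq α]
    (h : 4 < Fintype.card α) (a b c d : α) : ∃ k, k ≠ a ∧ k ≠ b ∧ k ≠ c ∧ k ≠ d := by
  have hcard : ({a, b, c, d} : Finset α).card < Finset.univ.card :=
    Finset.card_le_four.trans_lt h
  obtain ⟨k, -, hk⟩ := Finset.exists_mem_notMem_of_card_lt_card hcard
  simp only [Finset.mem_insert, Finset.mem_singleton, not_or] at hk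
  exact ⟨k, hk⟩

open Fin.NatCast

variable {m : ℕ} [NeZero m]

lemma cyc_two_mul (k : ℕ) : cyc m (2 * k) = .inl (k : Fin m) := by
  have h : 2 * k % (2 * m) % 2 = 0 := by rw [Nat.mul_mod_mul_left]; omega
  rw [cyc, if_pos h]
  congr 1
  ext
  simp [Nat.mul_mod_mul_left]

lemma cyc_two_mul_add_one (k : ℕ) : cyc m (2 * k + 1) = .inr (k : Fin m) := by
  have hm : 0 < m := NeZero.pos m
  have hmod : (2 * k + 1) % (2 * m) = 2 * (k % m) + 1 := by
    have hk : k % m < m := Nat.mod_lt _ hm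
    conv_lhs => rw [← Nat.mod_add_div k m,
      show 2 * (k % m + m * (k / m)) + 1 = 2 * (k % m) + 1 + 2 * m * (k / m) by ring]
    rw [Nat.add_mul_mod_self_left, Nat.mod_eq_of_lt (by omega)]
  have h : ¬ (2 * k + 1) % (2 * m) % 2 = 0 := by rw [hmod]; omega
  rw [cyc, if_neg h]
  congr 1
  ext
  simp only [hmod, Fin.val_natCast]
  omega

lemma cyc_surjective : Function.Surjective (cyc m) := by
  rintro (i | i)
  · exact ⟨2 * i, by rw [cyc_two_mul, Fin.cast_val_eq_self]⟩
  · exact ⟨2 * i + 1, by rw [cyc_two_mul_add_one, Fin.cast_val_eq_self]⟩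

lemma cyc_eq_cyc_iff {p q : ℕ} : cyc m p = cyc m q ↔ p % (2 * m) = q % (2 * m) := by
  refine ⟨fun h => ?_, fun h => by unfold cyc; simp_rw [h]⟩
  have hm : 0 < m := NeZero.pos m
  have hp : p % (2 * m) < 2 * m := Nat.mod_lt _ (by omega)
  have hq : q % (2 * m) < 2 * m := Nat.mod_lt _ (by omega)
  unfold cyc at h
  split_ifs at h <;> simp only [Sum.inl.injEq, Sum.inr.injEq, Fin.mk.injEq] at h <;> omega

namespace cycGraph

lemma adj_inl_inr_iff {i j : Fin m} :
    (cycGraph m).Adj (.inl i) (.inr j) ↔ j ≠ i ∧ i ≠ j + 1 := by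
  simp only [cycGraph, ne_eq, Fin.ext_iff, Fin.val_add, Fin.val_one', Nat.add_mod_mod]

lemma adj_inr_inl_iff {i j : Fin m} :
    (cycGraph m).Adj (.inr j) (.inl i) ↔ j ≠ i ∧ i ≠ j + 1 :=
  (cycGraph m).adj_comm _ _ |>.trans adj_inl_inr_iff

lemma dist_inl_inl (hm : 5 ≤ m) {i j : Fin m} (hij : i ≠ j) :
    (cycGraph m).dist (.inl i) (.inl j) = 2 := by
  obtain ⟨k, hki, hkj, hki', hkj'⟩ :=
    exists_ne_of_four_lt_card (by rw [Fintype.card_fin]; omega) i j (i - 1) (j - 1)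
  refine SimpleGraph.dist_eq_two_of_adj_of_adj (w := .inr k) (by simpa using hij) id ?_ ?_
  · exact adj_inl_inr_iff.mpr ⟨hki, fun h => hki' (eq_sub_of_add_eq h.symm)⟩
  · exact adj_inl_inr_iff.mpr ⟨hkj, fun h => hkj' (eq_sub_of_add_eq h.symm)⟩

lemma dist_inr_inr (hm : 5 ≤ m) {i j : Fin m} (hij : i ≠ j) :
    (cycGraph m).dist (.inr i) (.inr j) = 2 := by
  obtain ⟨k, hki, hkj, hki', hkj'⟩ :=
    exists_ne_of_four_lt_card (by rw [Fintype.card_fin]; omega) i j (i + 1) (j + 1)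
  refine SimpleGraph.dist_eq_two_of_adj_of_adj (w := .inl k) (by simpa using hij) id ?_ ?_
  · exact adj_inr_inl_iff.mpr ⟨Ne.symm hki, hki'⟩
  · exact adj_inr_inl_iff.mpr ⟨Ne.symm hkj, hkj'⟩

lemma adj_cyc_succ {p q : ℕ} (hpq : (p + 1) % 2 ≠ q % 2) (h₀ : cyc m p ≠ cyc m q)
    (h₂ : cyc m (p + 2) ≠ cyc m q) : (cycGraph m).Adj (cyc m (p + 1)) (cyc m q) := by
  obtain ⟨a, rfl | rfl⟩ := Nat.even_or_odd' p <;> obtain ⟨b, rfl | rfl⟩ := Nat.even_or_odd' q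
  · rw [show 2 * a + 2 = 2 * (a + 1) by ring] at h₂
    simp only [cyc_two_mul, cyc_two_mul_add_one, ne_eq, Sum.inl.injEq, Nat.cast_succ] at h₀ h₂ ⊢
    exact adj_inr_inl_iff.mpr ⟨h₀, Ne.symm h₂⟩
  · omega
  · omega
  · rw [show 2 * a + 1 + 2 = 2 * (a + 1) + 1 by ring] at h₂
    rw [show 2 * a + 1 + 1 = 2 * (a + 1) by ring]
    simp only [cyc_two_mul, cyc_two_mul_add_one, ne_eq, Sum.inr.injEq, Nat.cast_succ] at h₀ h₂ ⊢
    exact adj_inl_inr_iff.mpr ⟨Ne.symm h₂, fun h => h₀ (add_right_cancel h)⟩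

lemma dist_cyc_of_mod_two_eq (hm : 5 ≤ m) {p q : ℕ} (hpq : p % 2 = q % 2)
    (hne : cyc m p ≠ cyc m q) : (cycGraph m).dist (cyc m p) (cyc m q) = 2 := by
  obtain ⟨a, rfl | rfl⟩ := Nat.even_or_odd' p <;> obtain ⟨b, rfl | rfl⟩ := Nat.even_or_odd' q
  · rw [cyc_two_mul, cyc_two_mul] at hne ⊢
    exact dist_inl_inl hm fun h => hne (h ▸ rfl)
  · omega
  · omega
  · rw [cyc_two_mul_add_one, cyc_two_mul_add_one] at hne ⊢
    exact dist_inr_inr hm fun h => hne (h ▸ rfl)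

end cycGraph

variable {W : Set (Fin m ⊕ Fin m)}

lemma dist_cyc_succ_of_notMem (hm : 5 ≤ m) {p q : ℕ} (hrun : ∀ t ≤ 2, cyc m (p + t) ∉ W)
    (hq : cyc m q ∈ W) :
    (cycGraph m).dist (cyc m (p + 1)) (cyc m q) = if (p + 1) % 2 = q % 2 then 2 else 1 := by
  have hne : ∀ t ≤ 2, cyc m (p + t) ≠ cyc m q := fun t ht h => hrun t ht (h ▸ hq)
  split_ifs with hpq
  · exact cycGraph.dist_cyc_of_mod_two_eq hm hpq (hne 1 (by norm_num))
  · exact SimpleGraph.dist_eq_one_iff_adj.mpr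
      (cycGraph.adj_cyc_succ hpq (hne 0 (by norm_num)) (hne 2 le_rfl))

lemma cyc_succ_eq_of_resolves (hm : 5 ≤ m) (hW : Resolves (cycGraph m) W) {p p' : ℕ}
    (hpp' : p % 2 = p' % 2) (hp : ∀ t ≤ 2, cyc m (p + t) ∉ W)
    (hp' : ∀ t ≤ 2, cyc m (p' + t) ∉ W) : cyc m (p + 1) = cyc m (p' + 1) := by
  refine hW _ _ fun w hw => ?_
  obtain ⟨q, rfl⟩ := cyc_surjective w
  rw [dist_cyc_succ_of_notMem hm hp hw, dist_cyc_succ_of_notMem hm hp' hw,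
    show (p + 1) % 2 = (p' + 1) % 2 by omega]

lemma IsGap.cyc_add_add_notMem {s k : ℕ} (h : IsGap m W s 4) (hk₁ : 1 ≤ k) (hk₂ : k ≤ 2) :
    ∀ t ≤ 2, cyc m (s + k + t) ∉ W := fun t ht => by
  rw [add_assoc]
  exact h.2.2 (k + t) (by omega) (by omega)

/-- for `m ≥ 5`, at most one gap of a resolving set of
`K_{m,m} \ E(C_{2m})` contains four vertices (any two gaps of four vertices
start at the same cycle position mod `2m`). -/
theorem stmt8 (m : ℕ) [NeZero m] (hm : 5 ≤ m) (W : Set (Fin m ⊕ Fin m))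
    (hW : Resolves (cycGraph m) W) (s₁ s₂ : ℕ)
    (h₁ : IsGap m W s₁ 4) (h₂ : IsGap m W s₂ 4) :
    s₁ % (2 * m) = s₂ % (2 * m) := by
  by_cases hpar : s₁ % 2 = s₂ % 2
  · have h := cyc_succ_eq_of_resolves hm hW (by omega)
      (h₁.cyc_add_add_notMem le_rfl one_le_two) (h₂.cyc_add_add_notMem le_rfl one_le_two)
    exact Nat.ModEq.add_right_cancel' 2 (cyc_eq_cyc_iff.mp h)
  · have h := cyc_succ_eq_of_resolves hm hW (by omega)
      (h₁.cyc_add_add_notMem le_rfl one_le_two) (h₂.cyc_add_add_notMem one_le_two le_rfl)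
    have h' : cyc m s₁ = cyc m (s₂ + 1) :=
      cyc_eq_cyc_iff.mpr (Nat.ModEq.add_right_cancel' 2 (cyc_eq_cyc_iff.mp h))
    exact absurd (h' ▸ h₁.1) (h₂.2.2 1 le_rfl (by norm_num))
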